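/- arXiv:1212.6485 — 9 statements merged into one kernel-verified Lean document; each statement's English description precedes it below -/
import Mathlib

section
/- Let f : ℝ → ℝ be continuously differentiable on the closed interval [a,b] (a < b), with f(a) = 0 and f(b) < 0. Then there exists a point x₀ in the open interval (a,b) such that f(x₀) < 0 and the derivative f'(x₀) < 0. -/
theorem exists_neg_value_neg_deriv (a b : ℝ) (hab : a < b) (f : ℝ → ℝ)
    (hf : ContDiffOn ℝ 1 f (Set.Icc a b))
    (hfa : f a = 0) (hfb : f b < 0) :
    ∃ x₀ ∈ Set.Ioo a b, f x₀ < 0 ∧ derivWithin f (Set.Icc a b) x₀ < 0 := by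
  have hcont : ContinuousOn f (Set.Icc a b) := hf.continuousOn
  have hdiff : DifferentiableOn ℝ f (Set.Icc a b) := hf.differentiableOn one_ne_zero
  set S : Set ℝ := Set.Icc a b ∩ f ⁻¹' (Set.Ici 0) with hS
  have hSne : S.Nonempty := ⟨a, ⟨le_rfl, hab.le⟩, by simp [hfa]⟩
  have hSbdd : BddAbove S := ⟨b, fun x hx => hx.1.2⟩
  have hSclosed : IsClosed S :=
    hcont.preimage_isClosed_of_isClosed isClosed_Icc isClosed_Ici
  set c := sSup S with hc
  have hcS : c ∈ S := hSclosed.csSup_mem hSne hSbdd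
  have hcab : c ∈ Set.Icc a b := hcS.1
  have hfc : 0 ≤ f c := hcS.2
  have hcb : c < b := lt_of_le_of_ne hcab.2 (by intro h; rw [h] at hfc; linarith)
  have hneg : ∀ x, c < x → x ≤ b → f x < 0 := by
    intro x hcx hxb
    by_contra h
    push_neg at h
    have : x ∈ S := ⟨⟨hcab.1.trans hcx.le, hxb⟩, h⟩
    exact absurd (le_csSup hSbdd this) (not_le.mpr hcx)
  -- MVT on [c, b]
  have hsub : Set.Icc c b ⊆ Set.Icc a b := Set.Icc_subset_Icc hcab.1 le_rfl
  have hderiv : ∀ x ∈ Set.Ioo c b, HasDerivAt f (deriv f x) x := by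
    intro x hx
    have hmem : Set.Icc a b ∈ nhds x :=
      Icc_mem_nhds (hcab.1.trans_lt hx.1) hx.2
    exact ((hdiff x ⟨(hcab.1.trans hx.1.le), hx.2.le⟩).differentiableAt hmem).hasDerivAt
  obtain ⟨ξ, hξ, hξ'⟩ := exists_hasDerivAt_eq_slope f (deriv f) hcb
    (hcont.mono hsub) hderiv
  have hξab : ξ ∈ Set.Ioo a b := ⟨hcab.1.trans_lt hξ.1, hξ.2⟩
  have hfξ : f ξ < 0 := hneg ξ hξ.1 hξ.2.le
  have hdw : derivWithin f (Set.Icc a b) ξ = deriv f ξ :=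
    derivWithin_of_mem_nhds (Icc_mem_nhds hξab.1 hξab.2)
  refine ⟨ξ, hξab, hfξ, ?_⟩
  rw [hdw, hξ']
  apply div_neg_of_neg_of_pos <;> linarith
end

section
/- Let E be a real inner product space, let O₁, O, P ∈ E, and let R > 0 and 0 < h ≤ R satisfy ‖O − O₁‖ = R − h and ‖P − O₁‖ = R. Then P ≠ O, and the cosine of the angle between the vectors P − O and P − O₁ satisfies cos φ = ⟨P − O, P − O₁⟩/(‖P − O‖·‖P − O₁‖) ≥ √(2h/R − h²/R²) ≥ h/R. Moreover, equality in the first inequality holds if and only if ⟨P − O, O − O₁⟩ = 0. -/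
open RealInnerProductSpace

theorem euclidean_angle_estimate {E : Type*} [NormedAddCommGroup E]
    [InnerProductSpace ℝ E]
    (O₁ O P : E) (R h : ℝ) (hR : 0 < R) (hh : 0 < h) (hhR : h ≤ R)
    (hO : ‖O - O₁‖ = R - h) (hP : ‖P - O₁‖ = R) :
    P ≠ O ∧
    ⟪P - O, P - O₁⟫ / (‖P - O‖ * ‖P - O₁‖) ≥
      Real.sqrt (2 * h / R - h ^ 2 / R ^ 2) ∧
    Real.sqrt (2 * h / R - h ^ 2 / R ^ 2) ≥ h / R ∧
    (⟪P - O, P - O₁⟫ / (‖P - O‖ * ‖P - O₁‖) =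
        Real.sqrt (2 * h / R - h ^ 2 / R ^ 2) ↔
      ⟪P - O, O - O₁⟫ = 0) := by
  have hPO : P - O = (P - O₁) - (O - O₁) := by abel
  set t : ℝ := ⟪O - O₁, P - O₁⟫ with ht
  have hCS : t ≤ (R - h) * R := by
    calc t ≤ ‖O - O₁‖ * ‖P - O₁‖ := real_inner_le_norm _ _
    _ = (R - h) * R := by rw [hO, hP]
  have hc : ⟪P - O₁, O - O₁⟫ = t := real_inner_comm _ _
  have hN2 : ‖P - O‖ ^ 2 = R ^ 2 - 2 * t + (R - h) ^ 2 := by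
    rw [hPO, norm_sub_sq_real, hO, hP, hc]
  have hNpos : 0 < ‖P - O‖ := by
    nlinarith [norm_nonneg (P - O), sq_nonneg (‖P - O‖)]
  have hne : P ≠ O := by
    intro e
    rw [e, sub_self, norm_zero] at hNpos
    exact lt_irrefl 0 hNpos
  have hinner : ⟪P - O, P - O₁⟫ = R ^ 2 - t := by
    rw [hPO, inner_sub_left, real_inner_self_eq_norm_sq, hP, ht]
  have hinner2 : ⟪P - O, O - O₁⟫ = t - (R - h) ^ 2 := by
    rw [hPO, inner_sub_left, real_inner_self_eq_norm_sq, hO, hc]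
  have hseq : 2 * h / R - h ^ 2 / R ^ 2 = (R ^ 2 - (R - h) ^ 2) / R ^ 2 := by
    field_simp; ring
  have hs0 : 0 ≤ 2 * h / R - h ^ 2 / R ^ 2 := by
    rw [hseq]; apply div_nonneg; nlinarith; positivity
  have htR : 0 < R ^ 2 - t := by nlinarith
  have hCpos : 0 < (R ^ 2 - t) / (‖P - O‖ * R) :=
    div_pos htR (by positivity)
  have hNR2 : (‖P - O‖ * R) ^ 2 = (R ^ 2 - 2 * t + (R - h) ^ 2) * R ^ 2 := by
    rw [mul_pow, hN2]
  have key : Real.sqrt (2 * h / R - h ^ 2 / R ^ 2) ≤ (R ^ 2 - t) / (‖P - O‖ * R) := by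
    rw [hseq]
    have h1 : (R ^ 2 - (R - h) ^ 2) / R ^ 2 ≤ ((R ^ 2 - t) / (‖P - O‖ * R)) ^ 2 := by
      rw [div_pow, div_le_div_iff₀ (by positivity) (by positivity), hNR2]
      nlinarith [sq_nonneg (t - (R - h) ^ 2)]
    calc Real.sqrt ((R ^ 2 - (R - h) ^ 2) / R ^ 2)
        ≤ Real.sqrt (((R ^ 2 - t) / (‖P - O‖ * R)) ^ 2) := Real.sqrt_le_sqrt h1
      _ = (R ^ 2 - t) / (‖P - O‖ * R) := Real.sqrt_sq hCpos.le
  have hcos : ⟪P - O, P - O₁⟫ / (‖P - O‖ * ‖P - O₁‖) = (R ^ 2 - t) / (‖P - O‖ * R) := by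
    rw [hinner, hP]
  refine ⟨hne, ?_, ?_, ?_⟩
  · rw [hcos]; exact key
  · have h2 : (h / R) ^ 2 ≤ 2 * h / R - h ^ 2 / R ^ 2 := by
      rw [hseq, div_pow, div_le_div_iff₀ (by positivity) (by positivity)]
      nlinarith [mul_nonneg (mul_nonneg hh.le (sub_nonneg.mpr hhR)) (sq_nonneg R)]
    calc h / R = Real.sqrt ((h / R) ^ 2) := (Real.sqrt_sq (by positivity)).symm
      _ ≤ Real.sqrt (2 * h / R - h ^ 2 / R ^ 2) := Real.sqrt_le_sqrt h2
  · rw [hcos, hinner2]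
    constructor
    · intro heq
      have hsq : ((R ^ 2 - t) / (‖P - O‖ * R)) ^ 2 = 2 * h / R - h ^ 2 / R ^ 2 := by
        rw [heq, Real.sq_sqrt hs0]
      rw [hseq] at hsq
      rw [div_pow, div_eq_div_iff (by positivity) (by positivity), hNR2] at hsq
      have hz2 : (t - (R - h) ^ 2) ^ 2 * R ^ 2 = 0 := by linear_combination hsq
      have hz : (t - (R - h) ^ 2) ^ 2 = 0 :=
        (mul_eq_zero.mp hz2).resolve_right (pow_ne_zero 2 hR.ne')
      have h0 : t - (R - h) ^ 2 = 0 := by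
        exact pow_eq_zero_iff (two_ne_zero) |>.mp hz
      linarith
    · intro heq
      have ht' : t = (R - h) ^ 2 := by linarith
      have hsq : ((R ^ 2 - t) / (‖P - O‖ * R)) ^ 2 = 2 * h / R - h ^ 2 / R ^ 2 := by
        rw [hseq, div_pow, div_eq_div_iff (by positivity) (by positivity), hNR2, ht']
        ring
      calc (R ^ 2 - t) / (‖P - O‖ * R)
          = Real.sqrt (((R ^ 2 - t) / (‖P - O‖ * R)) ^ 2) := (Real.sqrt_sq hCpos.le).symm
        _ = Real.sqrt (2 * h / R - h ^ 2 / R ^ 2) := by rw [hsq]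
end

section
/- Let E be a real inner product space and let o, p, q ∈ E be unit vectors. Let 0 < R ≤ π/2 and 0 < h ≤ R, and suppose ⟨p, q⟩ = cos R and ⟨o, q⟩ = cos(R − h). Set u = o − ⟨o,p⟩·p and v = q − ⟨q,p⟩·p (the tangential projections at p of the directions toward o and toward q). Then u ≠ 0, v ≠ 0, and ⟨u, v⟩/(‖u‖·‖v‖) ≥ √(1 − sin²(R − h)/sin² R) ≥ sin h / sin R. -/
set_option maxHeartbeats 800000


open RealInnerProductSpace Real

theorem spherical_angle_estimate {E : Type*} [NormedAddCommGroup E]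
    [InnerProductSpace ℝ E]
    (o p q : E) (ho : ‖o‖ = 1) (hp : ‖p‖ = 1) (hq : ‖q‖ = 1)
    (R h : ℝ) (hR0 : 0 < R) (hRpi : R ≤ π / 2) (hh0 : 0 < h) (hhR : h ≤ R)
    (hpq : ⟪p, q⟫ = Real.cos R) (hoq : ⟪o, q⟫ = Real.cos (R - h)) :
    o - ⟪o, p⟫ • p ≠ 0 ∧ q - ⟪q, p⟫ • p ≠ 0 ∧
    ⟪o - ⟪o, p⟫ • p, q - ⟪q, p⟫ • p⟫ /
        (‖o - ⟪o, p⟫ • p‖ * ‖q - ⟪q, p⟫ • p‖) ≥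
      Real.sqrt (1 - Real.sin (R - h) ^ 2 / Real.sin R ^ 2) ∧
    Real.sqrt (1 - Real.sin (R - h) ^ 2 / Real.sin R ^ 2) ≥
      Real.sin h / Real.sin R := by
  have hpi := Real.pi_pos
  have hsR : 0 < Real.sin R := Real.sin_pos_of_pos_of_lt_pi hR0 (by linarith)
  have hsh : 0 < Real.sin h := Real.sin_pos_of_pos_of_lt_pi hh0 (by linarith)
  have hcR : 0 ≤ Real.cos R := Real.cos_nonneg_of_mem_Icc ⟨by linarith, hRpi⟩
  have hbc : Real.cos R < Real.cos (R - h) :=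
    Real.cos_lt_cos_of_nonneg_of_le_pi (by linarith) (by linarith) (by linarith)
  have hqp : ⟪q, p⟫ = Real.cos R := by rw [real_inner_comm]; exact hpq
  set a := ⟪o, p⟫ with ha
  have habs : |a| ≤ 1 := by
    have := abs_real_inner_le_norm o p
    rwa [ho, hp, one_mul] at this
  have ha1 : a ≠ 1 := by
    intro h1
    have : o = p := (inner_eq_one_iff_of_norm_eq_one ho hp).mp h1
    rw [this, hpq] at hoq
    linarith
  have han1 : a ≠ -1 := by
    intro h1
    have h2 : ⟪-o, p⟫ = (1:ℝ) := by
      rw [inner_neg_left, ← ha, h1]; norm_num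
    have h3 : -o = p := (inner_eq_one_iff_of_norm_eq_one (by simpa using ho) hp).mp h2
    have ho' : o = -p := by rw [← h3]; simp
    rw [ho', inner_neg_left, hpq] at hoq
    linarith
  have habs1 : |a| < 1 := by
    rcases lt_or_eq_of_le habs with h' | h'
    · exact h'
    · rcases (abs_eq (by norm_num : (0:ℝ) ≤ 1)).mp h' with h1 | h1
      · exact absurd h1 ha1
      · exact absurd h1 han1
  have ha2 : a ^ 2 < 1 := by nlinarith [abs_nonneg a, sq_abs a]
  have hpp : ⟪p, p⟫ = (1:ℝ) := by
    rw [real_inner_self_eq_norm_sq, hp]; norm_num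
  have hiuv : ⟪o - a • p, q - ⟪q, p⟫ • p⟫ =
      Real.cos (R - h) - a * Real.cos R := by
    rw [hqp]
    simp only [inner_sub_left, inner_sub_right, real_inner_smul_left,
      real_inner_smul_right, hpp, hoq, hpq]
    rw [ha, real_inner_comm p o]
    ring
  have hnu2 : ‖o - a • p‖ ^ 2 = 1 - a ^ 2 := by
    rw [norm_sub_sq_real, real_inner_smul_right, norm_smul, ho, hp, ← ha]
    simp [mul_pow, sq_abs]
    ring
  have hnv2 : ‖q - ⟪q, p⟫ • p‖ ^ 2 = Real.sin R ^ 2 := by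
    rw [norm_sub_sq_real, hqp, real_inner_smul_right, norm_smul, hq, hp, hqp]
    have hpyth := Real.sin_sq_add_cos_sq R
    simp [mul_pow, sq_abs]
    nlinarith [hpyth]
  have hnu : ‖o - a • p‖ = Real.sqrt (1 - a ^ 2) := by
    rw [← hnu2, Real.sqrt_sq (norm_nonneg _)]
  have hnv : ‖q - ⟪q, p⟫ • p‖ = Real.sin R := by
    rw [← Real.sqrt_sq hsR.le, ← hnv2, Real.sqrt_sq (norm_nonneg _)]
  have hu0 : o - a • p ≠ 0 := by
    intro h0
    rw [h0, norm_zero] at hnu2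
    nlinarith
  have hv0 : q - ⟪q, p⟫ • p ≠ 0 := by
    intro h0
    rw [h0, norm_zero] at hnv2
    nlinarith
  have hsqa : 0 < Real.sqrt (1 - a ^ 2) := Real.sqrt_pos.mpr (by nlinarith)
  have hsqa2 : Real.sqrt (1 - a ^ 2) ^ 2 = 1 - a ^ 2 :=
    Real.sq_sqrt (by nlinarith)
  have key2 : Real.sin h ^ 2 + Real.sin (R - h) ^ 2 ≤ Real.sin R ^ 2 := by
    have hs : Real.sin R = Real.sin (R - h) * Real.cos h +
        Real.cos (R - h) * Real.sin h := by
      rw [show R = R - h + h by ring, Real.sin_add]; ring_nf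
    have hc : Real.cos R = Real.cos (R - h) * Real.cos h -
        Real.sin (R - h) * Real.sin h := by
      rw [show R = R - h + h by ring, Real.cos_add]; ring_nf
    have hsx : 0 ≤ Real.sin (R - h) :=
      Real.sin_nonneg_of_nonneg_of_le_pi (by linarith) (by linarith)
    have hprod : 0 ≤ Real.sin (R - h) * Real.sin h * Real.cos R :=
      mul_nonneg (mul_nonneg hsx hsh.le) hcR
    have hexp : Real.sin R ^ 2 = Real.sin h ^ 2 + Real.sin (R - h) ^ 2 +
        2 * (Real.sin (R - h) * Real.sin h * Real.cos R) := by
      rw [hs, hc]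
      linear_combination Real.sin (R - h) ^ 2 * Real.sin_sq_add_cos_sq h +
        Real.sin h ^ 2 * Real.sin_sq_add_cos_sq (R - h)
    linarith
  have hs2 : (0:ℝ) < Real.sin R ^ 2 := by positivity
  refine ⟨hu0, hv0, ?_, ?_⟩
  · -- main inequality
    rw [ge_iff_le, hiuv, hnu, hnv]
    have hbac : 0 < Real.cos (R - h) - a * Real.cos R := by
      have h1 : (0:ℝ) ≤ (1 - a) * Real.cos R :=
        mul_nonneg (by linarith [le_abs_self a]) hcR
      nlinarith [h1]
    have hXnn : 0 ≤ (Real.cos (R - h) - a * Real.cos R) /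
        (Real.sqrt (1 - a ^ 2) * Real.sin R) :=
      le_of_lt (div_pos hbac (mul_pos hsqa hsR))
    calc Real.sqrt (1 - Real.sin (R - h) ^ 2 / Real.sin R ^ 2)
        ≤ Real.sqrt (((Real.cos (R - h) - a * Real.cos R) /
            (Real.sqrt (1 - a ^ 2) * Real.sin R)) ^ 2) := by
          apply Real.sqrt_le_sqrt
          rw [div_pow, mul_pow, hsqa2]
          have hLHS : 1 - Real.sin (R - h) ^ 2 / Real.sin R ^ 2 =
              (Real.cos (R - h) ^ 2 - Real.cos R ^ 2) / Real.sin R ^ 2 := by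
            field_simp
            linarith [Real.sin_sq_add_cos_sq R, Real.sin_sq_add_cos_sq (R - h)]
          rw [hLHS, div_le_div_iff₀ hs2 (mul_pos (by nlinarith) hs2)]
          have hident : (Real.cos (R - h) - a * Real.cos R) ^ 2 * Real.sin R ^ 2 -
              (Real.cos (R - h) ^ 2 - Real.cos R ^ 2) * ((1 - a ^ 2) * Real.sin R ^ 2) =
              Real.sin R ^ 2 * (a * Real.cos (R - h) - Real.cos R) ^ 2 := by ring
          linarith [mul_nonneg hs2.le (sq_nonneg (a * Real.cos (R - h) - Real.cos R)), hident]
      _ = (Real.cos (R - h) - a * Real.cos R) /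
            (Real.sqrt (1 - a ^ 2) * Real.sin R) := Real.sqrt_sq hXnn
  · rw [ge_iff_le, ← Real.sqrt_sq (le_of_lt (div_pos hsh hsR))]
    apply Real.sqrt_le_sqrt
    rw [div_pow, le_sub_iff_add_le, ← add_div, div_le_one hs2]
    linarith [key2]
end

section
/- Let k₁ > 0 and let R satisfy 0 < R < π/(2k₁). Define d(r) = (1/k₁)·arccos(cos(k₁R)/cos(k₁(R − r))) − r for r ∈ [0, R]. Then for every r ∈ [0, R] one has d(r) ≤ (2/k₁)·arccos(√(cos k₁R)) − R, and equality holds if and only if r = R − (1/k₁)·arccos(√(cos k₁R)). -/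
open Real

private lemma arccos_anti {x y : ℝ} (h : x ≤ y) : Real.arccos y ≤ Real.arccos x := by
  unfold Real.arccos
  have := Real.monotone_arcsin h
  linarith

private lemma spindle_key (a s : ℝ) (ha0 : 0 < a) (ha : a < π / 2)
    (hs0 : 0 ≤ s) (hsa : s ≤ a) :
    Real.arccos (Real.cos a / Real.cos s) ≤ 2 * Real.arccos (√(Real.cos a)) - s ∧
    (Real.arccos (Real.cos a / Real.cos s) = 2 * Real.arccos (√(Real.cos a)) - s ↔
      s = Real.arccos (√(Real.cos a))) := by
  have hπ := Real.pi_pos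
  set s₀ := Real.arccos (√(Real.cos a)) with hs₀def
  have hca : 0 < Real.cos a := Real.cos_pos_of_mem_Ioo ⟨by linarith, ha⟩
  have hca1 : Real.cos a < 1 := by
    have := Real.cos_lt_cos_of_nonneg_of_le_pi (le_refl 0) (by linarith) ha0
    simpa using this
  have hsqlt : √(Real.cos a) < 1 := by
    rw [show (1:ℝ) = √1 by simp]
    exact Real.sqrt_lt_sqrt hca.le hca1
  have hsqpos : 0 < √(Real.cos a) := Real.sqrt_pos.2 hca
  have hc0 : Real.cos s₀ = √(Real.cos a) :=
    Real.cos_arccos (by linarith) hsqlt.le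
  have hs₀pos : 0 < s₀ := Real.arccos_pos.2 hsqlt
  have hs₀lt : s₀ < π / 2 := Real.arccos_lt_pi_div_two.2 hsqpos
  have hcs₀sq : Real.cos s₀ ^ 2 = Real.cos a := by
    rw [hc0]; exact Real.sq_sqrt hca.le
  have ha2s₀ : a < 2 * s₀ := by
    by_contra h
    push_neg at h
    have h2 : Real.cos a ≤ Real.cos (2 * s₀) :=
      Real.cos_le_cos_of_nonneg_of_le_pi (by linarith) (by linarith) h
    rw [Real.cos_two_mul, hcs₀sq] at h2
    linarith
  have hcs : 0 < Real.cos s :=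
    Real.cos_pos_of_mem_Ioo ⟨by linarith, by linarith⟩
  have hcas : Real.cos a ≤ Real.cos s :=
    Real.cos_le_cos_of_nonneg_of_le_pi hs0 (by linarith) hsa
  have hdiv1 : Real.cos a / Real.cos s ≤ 1 := (div_le_one hcs).2 hcas
  have hdiv0 : 0 < Real.cos a / Real.cos s := div_pos hca hcs
  have e1 : Real.cos (2 * s₀ - s) = Real.cos (2 * s₀) * Real.cos s + Real.sin (2 * s₀) * Real.sin s :=
    Real.cos_sub _ _
  have e2 : Real.sin (s - s₀) = Real.sin s * Real.cos s₀ - Real.cos s * Real.sin s₀ :=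
    Real.sin_sub _ _
  have e3 : Real.cos (2 * s₀) = 2 * Real.cos s₀ ^ 2 - 1 := Real.cos_two_mul _
  have e4 : Real.sin (2 * s₀) = 2 * Real.sin s₀ * Real.cos s₀ := Real.sin_two_mul _
  have e5 : Real.sin s ^ 2 + Real.cos s ^ 2 = 1 := Real.sin_sq_add_cos_sq s
  have e6 : Real.sin s₀ ^ 2 + Real.cos s₀ ^ 2 = 1 := Real.sin_sq_add_cos_sq s₀
  have key : Real.cos a - Real.cos (2 * s₀ - s) * Real.cos s = Real.sin (s - s₀) ^ 2 := by
    rw [e1, e2, e3, e4, ← hcs₀sq]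
    nlinarith [e5, e6]
  have hle : Real.cos (2 * s₀ - s) ≤ Real.cos a / Real.cos s := by
    rw [le_div_iff₀ hcs]
    nlinarith [sq_nonneg (Real.sin (s - s₀))]
  have harc : Real.arccos (Real.cos (2 * s₀ - s)) = 2 * s₀ - s :=
    Real.arccos_cos (by linarith) (by linarith)
  have hineq : Real.arccos (Real.cos a / Real.cos s) ≤ 2 * s₀ - s := by
    calc Real.arccos (Real.cos a / Real.cos s) ≤ Real.arccos (Real.cos (2 * s₀ - s)) :=
          arccos_anti hle
      _ = 2 * s₀ - s := harc
  refine ⟨hineq, ?_, ?_⟩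
  · intro heq
    have hcoseq : Real.cos a / Real.cos s = Real.cos (2 * s₀ - s) := by
      have := congrArg Real.cos heq
      rwa [Real.cos_arccos (by linarith) hdiv1] at this
    have hsin0 : Real.sin (s - s₀) ^ 2 = 0 := by
      have : Real.cos a = Real.cos (2 * s₀ - s) * Real.cos s := by
        field_simp at hcoseq; linarith [hcoseq]
      linarith [key]
    have hsz : Real.sin (s - s₀) = 0 := by
      exact pow_eq_zero_iff (n := 2) (by norm_num) |>.mp hsin0
    have : s - s₀ = 0 :=
      (Real.sin_eq_zero_iff_of_lt_of_lt (by linarith) (by linarith)).1 hsz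
    linarith
  · intro heq
    subst heq
    have : Real.cos a / Real.cos s₀ = Real.cos s₀ := by
      rw [← hcs₀sq]; field_simp
    rw [this, hs₀def, hc0] 
    ring

theorem spindle_width_spherical (k₁ R : ℝ) (hk₁ : 0 < k₁)
    (hR0 : 0 < R) (hR : R < π / (2 * k₁)) :
    ∀ r ∈ Set.Icc (0 : ℝ) R,
      (1 / k₁) * Real.arccos (Real.cos (k₁ * R) / Real.cos (k₁ * (R - r))) - r ≤
        (2 / k₁) * Real.arccos (Real.sqrt (Real.cos (k₁ * R))) - R ∧
      ((1 / k₁) * Real.arccos (Real.cos (k₁ * R) / Real.cos (k₁ * (R - r))) - r =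
          (2 / k₁) * Real.arccos (Real.sqrt (Real.cos (k₁ * R))) - R ↔
        r = R - (1 / k₁) * Real.arccos (Real.sqrt (Real.cos (k₁ * R)))) := by
  intro r hr
  obtain ⟨hr0, hrR⟩ := hr
  have ha0 : 0 < k₁ * R := mul_pos hk₁ hR0
  have ha : k₁ * R < π / 2 := by
    have := (lt_div_iff₀ (by positivity : (0:ℝ) < 2 * k₁)).1 hR
    nlinarith
  have hs0 : 0 ≤ k₁ * (R - r) := by nlinarith
  have hsa : k₁ * (R - r) ≤ k₁ * R := by nlinarith
  obtain ⟨hle, hiff⟩ := spindle_key (k₁ * R) (k₁ * (R - r)) ha0 ha hs0 hsa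
  set X := Real.arccos (Real.cos (k₁ * R) / Real.cos (k₁ * (R - r))) with hX
  set Y := Real.arccos (√(Real.cos (k₁ * R))) with hY
  have hk₁' : k₁ ≠ 0 := ne_of_gt hk₁
  have hid : 1 / k₁ * (2 * Y - k₁ * (R - r)) = 2 / k₁ * Y - (R - r) := by
    field_simp
  constructor
  · have h := mul_le_mul_of_nonneg_left hle (by positivity : (0:ℝ) ≤ 1 / k₁)
    linarith [h, hid]
  · constructor
    · intro h
      have h' : X = 2 * Y - k₁ * (R - r) := by
        have h2 := congrArg (fun z => k₁ * z) h
        field_simp at h2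
        linarith
      have h3 := hiff.1 h'
      have : r = R - 1 / k₁ * Y := by field_simp; linarith
      exact this
    · intro h
      have hs : k₁ * (R - r) = Y := by rw [h]; field_simp; ring
      have h4 := hiff.2 hs
      have h5 := congrArg (fun z => 1 / k₁ * z) h4
      rw [hid] at h5
      linarith
end

section
/- Let k₁ > 0 and R > 0. Define d(r) = (1/k₁)·arcosh(cosh(k₁R)/cosh(k₁(R − r))) − r for r ∈ [0, R], where arcosh x = log(x + √(x² − 1)) for x ≥ 1. Then for every r ∈ [0, R] one has d(r) ≤ (2/k₁)·arcosh(√(cosh k₁R)) − R, and equality holds if and only if r = R − (1/k₁)·arcosh(√(cosh k₁R)). -/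
noncomputable def arcosh (x : ℝ) : ℝ := Real.log (x + Real.sqrt (x ^ 2 - 1))

lemma arcosh_aux {x : ℝ} (hx : 1 ≤ x) :
    Real.sqrt (x ^ 2 - 1) ^ 2 = x ^ 2 - 1 ∧ 1 ≤ x + Real.sqrt (x ^ 2 - 1) := by
  have h0 : (0:ℝ) ≤ x ^ 2 - 1 := by nlinarith
  constructor
  · exact Real.sq_sqrt h0
  · nlinarith [Real.sqrt_nonneg (x ^ 2 - 1)]

lemma arcosh_nonneg {x : ℝ} (hx : 1 ≤ x) : 0 ≤ arcosh x :=
  Real.log_nonneg (arcosh_aux hx).2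

lemma cosh_arcosh {x : ℝ} (hx : 1 ≤ x) : Real.cosh (arcosh x) = x := by
  obtain ⟨hs, h1⟩ := arcosh_aux hx
  set s := Real.sqrt (x ^ 2 - 1) with hsdef
  have hpos : (0:ℝ) < x + s := lt_of_lt_of_le one_pos h1
  have hinv : (x + s)⁻¹ = x - s := by
    have : (x + s) * (x - s) = 1 := by nlinarith
    field_simp
    nlinarith
  rw [arcosh, Real.cosh_eq, Real.exp_log hpos, ← Real.log_inv, Real.exp_log (by positivity),
    hinv]
  ring

lemma arcosh_cosh {t : ℝ} (ht : 0 ≤ t) : arcosh (Real.cosh t) = t := by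
  have h1 : Real.cosh t ^ 2 - 1 = Real.sinh t ^ 2 := by
    have := Real.cosh_sq t; linarith
  rw [arcosh, h1, Real.sqrt_sq (Real.sinh_nonneg_iff.2 ht), Real.cosh_add_sinh, Real.log_exp]

lemma cosh_eq_one_iff {x : ℝ} : Real.cosh x = 1 ↔ x = 0 := by
  constructor
  · intro h
    have : Real.cosh x ≤ Real.cosh 0 := by rw [Real.cosh_zero]; exact le_of_eq h
    have := (Real.cosh_le_cosh).1 this
    simpa [abs_eq_zero] using le_antisymm (by simpa using this) (abs_nonneg x)
  · intro h; simp [h]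

set_option maxHeartbeats 1000000 in
theorem spindle_width_hyperbolic (k₁ R : ℝ) (hk₁ : 0 < k₁) (hR : 0 < R) :
    ∀ r ∈ Set.Icc (0 : ℝ) R,
      (1 / k₁) * arcosh (Real.cosh (k₁ * R) / Real.cosh (k₁ * (R - r))) - r ≤
        (2 / k₁) * arcosh (Real.sqrt (Real.cosh (k₁ * R))) - R ∧
      ((1 / k₁) * arcosh (Real.cosh (k₁ * R) / Real.cosh (k₁ * (R - r))) - r =
          (2 / k₁) * arcosh (Real.sqrt (Real.cosh (k₁ * R))) - R ↔
        r = R - (1 / k₁) * arcosh (Real.sqrt (Real.cosh (k₁ * R)))) := by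
  intro r hr
  obtain ⟨hr0, hrR⟩ := hr
  set C := Real.cosh (k₁ * R) with hCdef
  set s := k₁ * (R - r) with hsdef
  have hs0 : 0 ≤ s := mul_nonneg (le_of_lt hk₁) (by linarith)
  have hsk : s ≤ k₁ * R := by nlinarith
  have hC1 : 1 ≤ C := Real.one_le_cosh _
  have hC0 : (0:ℝ) ≤ C := by linarith
  have hsqC : 1 ≤ Real.sqrt C := by
    rw [show (1:ℝ) = Real.sqrt 1 by simp]
    exact Real.sqrt_le_sqrt hC1
  set a := arcosh (Real.sqrt C) with hadef
  have ha : Real.cosh a = Real.sqrt C := cosh_arcosh hsqC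
  have ha0 : 0 ≤ a := arcosh_nonneg hsqC
  have hcs_pos : 0 < Real.cosh s := Real.cosh_pos s
  have hcosh_s_le : Real.cosh s ≤ C := by
    rw [hCdef]
    exact Real.cosh_le_cosh.2 (by rw [abs_of_nonneg hs0, abs_of_nonneg (by positivity)]; exact hsk)
  have hx1 : 1 ≤ C / Real.cosh s := (one_le_div hcs_pos).2 hcosh_s_le
  set u := arcosh (C / Real.cosh s) with hudef
  have hu : Real.cosh u = C / Real.cosh s := cosh_arcosh hx1
  have hu0 : 0 ≤ u := arcosh_nonneg hx1
  have hmul : Real.cosh u * Real.cosh s = C := by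
    rw [hu]; field_simp
  have key : Real.cosh (u + s) + Real.cosh (u - s) = 2 * C := by
    rw [Real.cosh_add, Real.cosh_sub]; linarith [hmul]
  have hsqCsq : Real.sqrt C ^ 2 = C := Real.sq_sqrt hC0
  have hca : Real.cosh a ^ 2 = C := by rw [ha, hsqCsq]
  have h2a : Real.cosh (2 * a) = 2 * C - 1 := by
    have h1 := Real.cosh_sq a
    rw [Real.cosh_two_mul]; linarith
  have hone : 1 ≤ Real.cosh (u - s) := Real.one_le_cosh _
  have hle : Real.cosh (u + s) ≤ Real.cosh (2 * a) := by rw [h2a]; linarith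
  have hmain : u + s ≤ 2 * a := by
    have := Real.cosh_le_cosh.1 hle
    rwa [abs_of_nonneg (by linarith), abs_of_nonneg (by linarith)] at this
  clear_value C s u a
  -- equality analysis
  have heqiff : u + s = 2 * a ↔ s = a := by
    constructor
    · intro h
      have hc1 : Real.cosh (u - s) = 1 := by
        rw [h, h2a] at key; linarith
      have hus : u = s := by have := cosh_eq_one_iff.1 hc1; linarith
      have hcs2 : Real.cosh s ^ 2 = C := by rw [← hus] at hmul ⊢; nlinarith [hmul]
      have hcs : Real.cosh s = Real.sqrt C := by
        rw [← hcs2, Real.sqrt_sq (le_of_lt hcs_pos)]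
      calc s = arcosh (Real.cosh s) := (arcosh_cosh hs0).symm
        _ = a := by rw [hcs, ← hadef]
    · intro h
      have hcsa : Real.cosh s = Real.sqrt C := by rw [h, ha]
      have hcu : Real.cosh u = Real.cosh a := by
        rw [hu, hcsa, ha, eq_comm, eq_div_iff (by positivity)]
        nlinarith
      have hua : u = a := by
        rw [← arcosh_cosh hu0, hcu, arcosh_cosh ha0]
      rw [hua, h]; ring
  have hk : k₁ ≠ 0 := ne_of_gt hk₁
  have hrw : (1 / k₁) * u - r = ((u + s) - 2 * a) / k₁ + ((2 / k₁) * a - R) := by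
    rw [hsdef]; field_simp; ring
  refine ⟨?_, ?_⟩
  · rw [hrw]
    have : ((u + s) - 2 * a) / k₁ ≤ 0 := div_nonpos_of_nonpos_of_nonneg (by linarith) (le_of_lt hk₁)
    linarith
  · rw [hrw]
    constructor
    · intro h
      have h' : ((u + s) - 2 * a) / k₁ = 0 := by linarith
      have hus : u + s = 2 * a := by
        have := (div_eq_zero_iff.1 h').resolve_right hk
        linarith
      have hsa := heqiff.1 hus
      have hkey : k₁ * (R - r) = a := by rw [← hsdef, hsa]
      have h1 : 1 / k₁ * a = R - r := by
        field_simp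
        linear_combination -hkey
      linarith
    · intro h
      have hsa : s = a := by
        rw [hsdef, h]
        field_simp
        ring
      have hus := heqiff.2 hsa
      rw [hus]; simp
end

section
/- Let K be a compact convex set with nonempty interior in a real inner product space, let R > 0, let O be an interior point of K, and let h > 0 be such that the open ball of radius h around O is contained in K. Let P be a boundary point of K and let c be a point with ‖P − c‖ = R and K ⊆ closedBall(c, R). Then h ≤ R, P ≠ O, and the cosine of the angle between P − O and P − c satisfies ⟨P − O, P − c⟩/(‖P − O‖·‖P − c‖) ≥ √(2h/R − h²/R²) ≥ h/R. -/
open RealInnerProductSpace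

theorem angle_comparison_enclosing_sphere {E : Type*} [NormedAddCommGroup E]
    [InnerProductSpace ℝ E]
    (K : Set E) (hKc : IsCompact K) (hKconv : Convex ℝ K)
    (R : ℝ) (hR : 0 < R)
    (O : E) (hO : O ∈ interior K)
    (h : ℝ) (hh : 0 < h) (hball : Metric.ball O h ⊆ K)
    (P : E) (hP : P ∈ frontier K)
    (c : E) (hPc : ‖P - c‖ = R) (hKc' : K ⊆ Metric.closedBall c R) :
    h ≤ R ∧ P ≠ O ∧
    ⟪P - O, P - c⟫ / (‖P - O‖ * ‖P - c‖) ≥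
      Real.sqrt (2 * h / R - h ^ 2 / R ^ 2) ∧
    Real.sqrt (2 * h / R - h ^ 2 / R ^ 2) ≥ h / R := by
  have hPO : P ≠ O := by
    intro e
    exact hP.2 (e ▸ hO)
  have hPOn : 0 < ‖P - O‖ := by
    rw [norm_pos_iff, sub_ne_zero]; exact hPO
  -- key: any point at distance t < h from O lies in closedBall c R
  have key : ∀ t : ℝ, 0 ≤ t → t < h → ∀ u : E, ‖u‖ = 1 → ‖O + t • u - c‖ ≤ R := by
    intro t ht ht' u hu
    have hmem : O + t • u ∈ Metric.ball O h := by
      simp only [Metric.mem_ball, dist_eq_norm, add_sub_cancel_left, norm_smul, hu,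
        Real.norm_eq_abs, abs_of_nonneg ht, mul_one]
      exact ht'
    have := hKc' (hball hmem)
    simpa [Metric.mem_closedBall, dist_eq_norm] using this
  have hd : ‖O - c‖ + h ≤ R := by
    rcases eq_or_ne O c with rfl | hoc
    · simp only [sub_self, norm_zero, zero_add]
      have step : ∀ t : ℝ, t < h → t ≤ R := by
        intro t ht'
        rcases le_or_gt 0 t with ht | ht
        · have := key t ht ht' (‖P - O‖⁻¹ • (P - O))
            (by rw [norm_smul, Real.norm_eq_abs, abs_inv, abs_of_nonneg (norm_nonneg _)]
                field_simp)
          simpa [add_sub_cancel_left, norm_smul, abs_of_nonneg ht, abs_inv,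
            abs_of_nonneg (norm_nonneg (P - O)), mul_assoc,
            inv_mul_cancel₀ hPOn.ne'] using this
        · linarith
      by_contra hcon
      push_neg at hcon
      obtain ⟨t, h1, h2⟩ := exists_between hcon
      exact absurd (step t h2) (not_le.mpr h1)
    · have hocn : 0 < ‖O - c‖ := by rw [norm_pos_iff, sub_ne_zero]; exact hoc
      have step : ∀ t : ℝ, t < h → t ≤ R - ‖O - c‖ := by
        intro t ht'
        rcases le_or_gt 0 t with ht | ht
        · have hu : ‖(‖O - c‖⁻¹ • (O - c))‖ = 1 := by
            rw [norm_smul, Real.norm_eq_abs, abs_inv, abs_of_nonneg (norm_nonneg _)]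
            field_simp
          have := key t ht ht' _ hu
          have heq : O + t • (‖O - c‖⁻¹ • (O - c)) - c = (1 + t * ‖O - c‖⁻¹) • (O - c) := by
            rw [add_smul, one_smul, smul_smul]; abel
          rw [heq, norm_smul, Real.norm_eq_abs,
            abs_of_nonneg (by positivity : (0:ℝ) ≤ 1 + t * ‖O - c‖⁻¹)] at this
          have : ‖O - c‖ + t ≤ R := by
            calc ‖O - c‖ + t = (1 + t * ‖O - c‖⁻¹) * ‖O - c‖ := by
                  rw [add_mul, one_mul, mul_assoc, inv_mul_cancel₀ hocn.ne', mul_one]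
              _ ≤ R := this
          linarith
        · have := key 0 le_rfl hh (‖P - O‖⁻¹ • (P - O))
            (by rw [norm_smul, Real.norm_eq_abs, abs_inv, abs_of_nonneg (norm_nonneg _)]
                field_simp)
          simp only [zero_smul, add_zero] at this
          linarith
      have : h ≤ R - ‖O - c‖ := by
        by_contra hcon
        push_neg at hcon
        obtain ⟨t, h1, h2⟩ := exists_between hcon
        exact absurd (step t h2) (not_le.mpr h1)
      linarith
  have hhR : h ≤ R := by
    have := norm_nonneg (O - c); linarith
  set s : ℝ := ⟪P - O, P - c⟫ with hs_def
  have hsplit : P - O = (P - c) + (c - O) := by abel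
  have hbb : ⟪P - c, P - c⟫ = R ^ 2 := by
    rw [real_inner_self_eq_norm_sq, hPc]
  have hs : s = R ^ 2 + ⟪c - O, P - c⟫ := by
    rw [hs_def, hsplit, inner_add_left, hbb]
  have hco : ‖c - O‖ = ‖O - c‖ := norm_sub_rev _ _
  have hmle : ‖c - O‖ ≤ R - h := by rw [hco]; linarith
  have hinner_lb : -(‖c - O‖ * ‖P - c‖) ≤ ⟪c - O, P - c⟫ :=
    neg_le_of_abs_le (abs_real_inner_le_norm _ _)
  have hslb : h * R ≤ s := by
    rw [hs]
    have : -((R - h) * R) ≤ ⟪c - O, P - c⟫ := by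
      refine le_trans ?_ hinner_lb
      rw [hPc]
      nlinarith [norm_nonneg (c - O)]
    nlinarith
  have hspos : 0 < s := lt_of_lt_of_le (by positivity) hslb
  have hna : ‖P - O‖ ^ 2 = 2 * s - R ^ 2 + ‖c - O‖ ^ 2 := by
    have : ‖P - O‖ ^ 2 = ⟪P - O, P - O⟫ := (real_inner_self_eq_norm_sq _).symm
    rw [this, hsplit, inner_add_left, inner_add_right, inner_add_right, hbb,
      ← real_inner_self_eq_norm_sq]
    have hX : ⟪c - O, P - c⟫ = s - R ^ 2 := by rw [hs]; ring
    have hX2 : ⟪P - c, c - O⟫ = s - R ^ 2 := by rw [real_inner_comm]; exact hX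
    linarith [hX, hX2]
  have hq0 : 0 ≤ 2 * h * R - h ^ 2 := by nlinarith
  have hmsq : ‖c - O‖ ^ 2 ≤ (R - h) ^ 2 := by
    nlinarith [norm_nonneg (c - O)]
  have key2 : (2 * h * R - h ^ 2) * ‖P - O‖ ^ 2 ≤ s ^ 2 := by
    nlinarith [sq_nonneg (s - (2 * h * R - h ^ 2)),
      mul_le_mul_of_nonneg_left hmsq hq0]
  have hqeq : 2 * h / R - h ^ 2 / R ^ 2 = (2 * h * R - h ^ 2) / R ^ 2 := by
    field_simp
  refine ⟨hhR, hPO, ?_, ?_⟩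
  · -- cosine bound
    have hcos_sq : 2 * h / R - h ^ 2 / R ^ 2 ≤ (s / (‖P - O‖ * ‖P - c‖)) ^ 2 := by
      rw [hqeq, hPc, div_pow]
      rw [div_le_div_iff₀ (by positivity) (by positivity)]
      have : (‖P - O‖ * R) ^ 2 = ‖P - O‖ ^ 2 * R ^ 2 := by ring
      rw [this]
      nlinarith [key2, sq_nonneg R]
    have hcospos : 0 ≤ s / (‖P - O‖ * ‖P - c‖) := by
      apply div_nonneg hspos.le
      positivity
    calc Real.sqrt (2 * h / R - h ^ 2 / R ^ 2)
        ≤ Real.sqrt ((s / (‖P - O‖ * ‖P - c‖)) ^ 2) := Real.sqrt_le_sqrt hcos_sq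
      _ = s / (‖P - O‖ * ‖P - c‖) := by rw [Real.sqrt_sq hcospos]
  · -- sqrt ≥ h/R
    have h1 : (h / R) ^ 2 ≤ 2 * h / R - h ^ 2 / R ^ 2 := by
      rw [hqeq, div_pow, div_le_div_iff₀ (by positivity) (by positivity)]
      nlinarith [mul_nonneg (mul_nonneg hh.le (sub_nonneg.mpr hhR)) (sq_nonneg R)]
    calc Real.sqrt (2 * h / R - h ^ 2 / R ^ 2)
        ≥ Real.sqrt ((h / R) ^ 2) := Real.sqrt_le_sqrt h1
      _ = h / R := Real.sqrt_sq (by positivity)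
end

section
/- Let Θ > 0 and h ∈ ℝ, and let f, ρ : ℝ → ℝ be differentiable on [0, Θ) with f(0) = ρ(0) = h. Suppose ρ'(θ) > 0 for all θ ∈ [0, Θ), that f([0, Θ)) ⊆ ρ([0, Θ)), and that for all θ₁, θ₂ ∈ [0, Θ) with f(θ₁) = ρ(θ₂) one has 0 ≤ f'(θ₁) ≤ ρ'(θ₂). Then f(θ) ≤ ρ(θ) for all θ ∈ [0, Θ). -/
open Set Filter

/-- `Ico 0 Θ` is a neighborhood of `x` within `Ici x` for `0 ≤ x < Θ`. -/
lemma myIco_mem_nhdsWithin_Ici {Θ x : ℝ} (hx0 : 0 ≤ x) (hxΘ : x < Θ) :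
    Set.Ico 0 Θ ∈ nhdsWithin x (Set.Ici x) := by
  have h1 : Set.Iio Θ ∈ nhdsWithin x (Set.Ici x) :=
    mem_nhdsWithin_of_mem_nhds (Iio_mem_nhds hxΘ)
  have h2 : Set.Ici x ∈ nhdsWithin x (Set.Ici x) := self_mem_nhdsWithin
  filter_upwards [h1, h2] with y hy1 hy2
  exact ⟨le_trans hx0 hy2, hy1⟩

theorem radial_graph_comparison (Θ h : ℝ) (hΘ : 0 < Θ)
    (f ρ f' ρ' : ℝ → ℝ)
    (hf : ∀ θ ∈ Set.Ico 0 Θ, HasDerivWithinAt f (f' θ) (Set.Ico 0 Θ) θ)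
    (hρ : ∀ θ ∈ Set.Ico 0 Θ, HasDerivWithinAt ρ (ρ' θ) (Set.Ico 0 Θ) θ)
    (hf0 : f 0 = h) (hρ0 : ρ 0 = h)
    (hρ'pos : ∀ θ ∈ Set.Ico 0 Θ, 0 < ρ' θ)
    (himg : f '' Set.Ico 0 Θ ⊆ ρ '' Set.Ico 0 Θ)
    (hcomp : ∀ θ₁ ∈ Set.Ico 0 Θ, ∀ θ₂ ∈ Set.Ico 0 Θ,
      f θ₁ = ρ θ₂ → 0 ≤ f' θ₁ ∧ f' θ₁ ≤ ρ' θ₂) :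
    ∀ θ ∈ Set.Ico 0 Θ, f θ ≤ ρ θ := by
  have hfc : ContinuousOn f (Set.Ico 0 Θ) := fun x hx => (hf x hx).continuousWithinAt
  have hρc : ContinuousOn ρ (Set.Ico 0 Θ) := fun x hx => (hρ x hx).continuousWithinAt
  rintro θ ⟨hθ0, hθΘ⟩
  rcases eq_or_lt_of_le hθ0 with rfl | hθpos
  · rw [hf0, hρ0]
  -- Step 1: for every ε with 0 < ε and (1+ε)*θ < Θ, we have f θ ≤ ρ ((1+ε)*θ).
  have key : ∀ ε : ℝ, 0 < ε → (1 + ε) * θ < Θ → f θ ≤ ρ ((1 + ε) * θ) := by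
    intro ε hε hεΘ
    have h1ε : 1 < 1 + ε := by linarith
    have h1ε0 : (0:ℝ) < 1 + ε := by linarith
    -- auxiliary: x ∈ Icc 0 θ (or Ico) facts
    have hsub : Set.Icc 0 θ ⊆ Set.Ico 0 Θ := fun x hx => ⟨hx.1, lt_of_le_of_lt hx.2 hθΘ⟩
    have hmem : ∀ x ∈ Set.Ico 0 θ, x ∈ Set.Ico 0 Θ := fun x hx => hsub ⟨hx.1, le_of_lt hx.2⟩
    have hmem' : ∀ x ∈ Set.Icc 0 θ, (1 + ε) * x ∈ Set.Ico 0 Θ := by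
      intro x hx
      constructor
      · exact mul_nonneg (by linarith) hx.1
      · calc (1 + ε) * x ≤ (1 + ε) * θ := by nlinarith [hx.2]
          _ < Θ := hεΘ
    have hB' : ∀ x ∈ Set.Ico 0 θ,
        HasDerivWithinAt (fun y => ρ ((1 + ε) * y)) ((1 + ε) * ρ' ((1 + ε) * x))
          (Set.Ici x) x := by
      intro x hx
      have hLx : (1 + ε) * x ∈ Set.Ico 0 Θ := hmem' x ⟨hx.1, le_of_lt hx.2⟩
      have hL : HasDerivWithinAt (fun y : ℝ => (1 + ε) * y) (1 + ε)
          (Set.Ico 0 (Θ / (1 + ε))) x := by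
        simpa using ((hasDerivWithinAt_id x _).const_mul (1 + ε))
      have hmaps : Set.MapsTo (fun y : ℝ => (1 + ε) * y) (Set.Ico 0 (Θ / (1 + ε)))
          (Set.Ico 0 Θ) := by
        intro y hy
        constructor
        · exact mul_nonneg (by linarith) hy.1
        · have := hy.2
          calc (1 + ε) * y < (1 + ε) * (Θ / (1 + ε)) := by
                exact (mul_lt_mul_iff_right₀ h1ε0).2 this
            _ = Θ := by field_simp
      have hcomp' : HasDerivWithinAt (fun y => ρ ((1 + ε) * y))
          (ρ' ((1 + ε) * x) * (1 + ε)) (Set.Ico 0 (Θ / (1 + ε))) x :=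
        (hρ _ hLx).comp x hL hmaps
      have hxlt : x < Θ / (1 + ε) := by
        rw [lt_div_iff₀ h1ε0]
        calc x * (1 + ε) = (1 + ε) * x := mul_comm _ _
          _ < Θ := lt_of_le_of_lt (by nlinarith [hx.2, hx.1]) hεΘ
      have := hcomp'.mono_of_mem_nhdsWithin (myIco_mem_nhdsWithin_Ici hx.1 hxlt)
      simpa [mul_comm] using this
    have hf' : ∀ x ∈ Set.Ico 0 θ, HasDerivWithinAt f (f' x) (Set.Ici x) x := by
      intro x hx
      exact (hf x (hmem x hx)).mono_of_mem_nhdsWithin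
        (myIco_mem_nhdsWithin_Ici hx.1 (lt_of_lt_of_le hx.2 (le_of_lt hθΘ)))
    have hBc : ContinuousOn (fun y => ρ ((1 + ε) * y)) (Set.Icc 0 θ) := by
      apply hρc.comp (continuous_const.mul continuous_id).continuousOn
      intro y hy
      exact hmem' y hy
    have ha : f 0 ≤ (fun y => ρ ((1 + ε) * y)) 0 := by simp [hf0, hρ0]
    have bound : ∀ x ∈ Set.Ico 0 θ, f x = (fun y => ρ ((1 + ε) * y)) x →
        f' x < (1 + ε) * ρ' ((1 + ε) * x) := by
      intro x hx hfx
      have hx1 : x ∈ Set.Ico 0 Θ := hmem x hx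
      have hx2 : (1 + ε) * x ∈ Set.Ico 0 Θ := hmem' x ⟨hx.1, le_of_lt hx.2⟩
      have h2 := (hcomp x hx1 ((1 + ε) * x) hx2 hfx).2
      have h3 := hρ'pos _ hx2
      nlinarith
    have := image_le_of_deriv_right_lt_deriv_boundary' (hfc.mono hsub) hf' ha hBc hB' bound
      (Set.right_mem_Icc.2 (le_of_lt hθpos))
    simpa using this
  -- Step 2: let ε → 0⁺.
  have hδ : 0 < Θ / θ - 1 := by
    rw [sub_pos, lt_div_iff₀ hθpos]
    linarith
  have hev : ∀ᶠ ε in nhdsWithin (0:ℝ) (Set.Ioi 0), f θ ≤ ρ ((1 + ε) * θ) := by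
    have hmem : Set.Ioo (0:ℝ) (Θ / θ - 1) ∈ nhdsWithin (0:ℝ) (Set.Ioi 0) :=
      Ioo_mem_nhdsGT_of_mem ⟨le_refl 0, hδ⟩
    filter_upwards [hmem] with ε hε
    apply key ε hε.1
    have := hε.2
    calc (1 + ε) * θ < (1 + (Θ / θ - 1)) * θ := by nlinarith
      _ = Θ := by field_simp; ring
  have htend : Tendsto (fun ε : ℝ => ρ ((1 + ε) * θ)) (nhdsWithin 0 (Set.Ioi 0))
      (nhds (ρ θ)) := by
    have h1 : Tendsto (fun ε : ℝ => (1 + ε) * θ) (nhdsWithin 0 (Set.Ioi 0))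
        (nhdsWithin θ (Set.Ico 0 Θ)) := by
      apply tendsto_nhdsWithin_of_tendsto_nhds_of_eventually_within
      · have : Tendsto (fun ε : ℝ => (1 + ε) * θ) (nhds 0) (nhds ((1 + 0) * θ)) := by
          exact (tendsto_const_nhds.add tendsto_id).mul tendsto_const_nhds
        simpa using this.mono_left nhdsWithin_le_nhds
      · have hmem : Set.Ioo (0:ℝ) (Θ / θ - 1) ∈ nhdsWithin (0:ℝ) (Set.Ioi 0) :=
          Ioo_mem_nhdsGT_of_mem ⟨le_refl 0, hδ⟩
        filter_upwards [hmem] with ε hε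
        constructor
        · have h0ε : (0:ℝ) < ε := hε.1
          nlinarith
        · have := hε.2
          calc (1 + ε) * θ < (1 + (Θ / θ - 1)) * θ := by nlinarith
            _ = Θ := by field_simp; ring
    exact (hρc θ ⟨hθ0, hθΘ⟩).tendsto.comp h1
  exact ge_of_tendsto htend hev
end

section
/- For a fixed k₀ > 0, the function k₁ ↦ (1/k₁)·(2·arccos(√k₀ / (k₀² + k₁²)^{1/4}) − arctan(k₁/k₀)), defined for k₁ > 0, tends to (√2 − 1)/k₀ as k₁ tends to 0 from the right. -/
open Real Topology Filter

lemma arccos_eq_two_arcsin {x : ℝ} (h1 : -1 ≤ x) (h2 : x ≤ 1) :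
    Real.arccos x = 2 * Real.arcsin (Real.sqrt ((1 - x) / 2)) := by
  set y := Real.sqrt ((1 - x) / 2) with hy
  have hnn : (0:ℝ) ≤ (1 - x) / 2 := by linarith
  have hy0 : 0 ≤ y := Real.sqrt_nonneg _
  have hysq : y ^ 2 = (1 - x) / 2 := Real.sq_sqrt hnn
  have hy1 : y ≤ 1 := by
    nlinarith [hysq, hy0]
  have hcos : Real.cos (2 * Real.arcsin y) = x := by
    rw [Real.cos_two_mul, Real.cos_arcsin,
      Real.sq_sqrt (by nlinarith : (0:ℝ) ≤ 1 - y ^ 2)]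
    nlinarith [hysq]
  have h0 : 0 ≤ 2 * Real.arcsin y := by
    have := Real.arcsin_nonneg.mpr hy0
    linarith
  have hπ : 2 * Real.arcsin y ≤ Real.pi := by
    have := Real.arcsin_le_pi_div_two y
    linarith
  calc Real.arccos x = Real.arccos (Real.cos (2 * Real.arcsin y)) := by rw [hcos]
    _ = 2 * Real.arcsin y := Real.arccos_cos h0 hπ

theorem spherical_width_tendsto_euclidean (k₀ : ℝ) (hk₀ : 0 < k₀) :
    Tendsto (fun k₁ : ℝ =>
        (1 / k₁) * (2 * Real.arccos (Real.sqrt k₀ /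
          (k₀ ^ 2 + k₁ ^ 2) ^ ((1 : ℝ) / 4)) - Real.arctan (k₁ / k₀)))
      (𝓝[>] 0) (𝓝 ((Real.sqrt 2 - 1) / k₀)) := by
  set φ : ℝ → ℝ := fun s => Real.sqrt k₀ / (k₀ ^ 2 + s) ^ ((1:ℝ)/4) with hφdef
  set u : ℝ → ℝ := fun k₁ => Real.sqrt k₀ / (k₀ ^ 2 + k₁ ^ 2) ^ ((1:ℝ)/4) with hudef
  set g : ℝ → ℝ := fun k₁ => Real.sqrt ((1 - u k₁) / 2) with hgdef
  have hk₀2 : (0:ℝ) < k₀ ^ 2 := by positivity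
  have hsk₀ : (0:ℝ) < Real.sqrt k₀ := Real.sqrt_pos.mpr hk₀
  have hroot : (k₀ ^ 2) ^ ((1:ℝ)/4) = Real.sqrt k₀ := by
    rw [Real.sqrt_eq_rpow, ← Real.rpow_natCast k₀ 2, ← Real.rpow_mul hk₀.le]
    norm_num
  have hden : ∀ k₁ : ℝ, 0 < (k₀ ^ 2 + k₁ ^ 2) ^ ((1:ℝ)/4) := fun k₁ =>
    Real.rpow_pos_of_pos (by positivity) _
  have hu_nonneg : ∀ k₁, 0 ≤ u k₁ := fun k₁ =>
    div_nonneg (Real.sqrt_nonneg _) (hden k₁).le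
  have hu_le_one : ∀ k₁ : ℝ, u k₁ ≤ 1 := by
    intro k₁
    rw [hudef, div_le_one (hden k₁), ← hroot]
    exact Real.rpow_le_rpow hk₀2.le (by nlinarith [sq_nonneg k₁]) (by norm_num)
  have hu_lt_one : ∀ k₁ : ℝ, k₁ ≠ 0 → u k₁ < 1 := by
    intro k₁ h
    have : (0:ℝ) < k₁ ^ 2 := by positivity
    rw [hudef, div_lt_one (hden k₁), ← hroot]
    exact Real.rpow_lt_rpow hk₀2.le (by linarith) (by norm_num)
  have hφ0 : φ 0 = 1 := by
    simp only [hφdef, add_zero, hroot, div_self hsk₀.ne']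
  -- derivative of φ at 0
  have hφderiv : HasDerivAt φ (-(1 / (4 * k₀ ^ 2))) 0 := by
    have hbase : HasDerivAt (fun s : ℝ => k₀ ^ 2 + s) 1 0 := by
      simpa using (hasDerivAt_id (0:ℝ)).const_add (k₀ ^ 2)
    have hpow : HasDerivAt (fun s : ℝ => (k₀ ^ 2 + s) ^ ((1:ℝ)/4))
        (((1:ℝ)/4) * (k₀ ^ 2) ^ ((1:ℝ)/4 - 1) * 1) 0 := by
      have := (Real.hasDerivAt_rpow_const (x := k₀ ^ 2 + 0) (p := (1:ℝ)/4)
        (Or.inl (by positivity))).comp 0 hbase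
      simpa [Function.comp_def] using this
    have hd := (hasDerivAt_const (0:ℝ) (Real.sqrt k₀)).div hpow
      (by rw [add_zero, hroot]; exact hsk₀.ne')
    have heq : (0 * (k₀ ^ 2 + 0) ^ ((1:ℝ)/4) -
        Real.sqrt k₀ * (((1:ℝ)/4) * (k₀ ^ 2) ^ ((1:ℝ)/4 - 1) * 1)) /
        ((k₀ ^ 2 + 0) ^ ((1:ℝ)/4)) ^ 2 = -(1 / (4 * k₀ ^ 2)) := by
      rw [add_zero, hroot]
      have e1 : (k₀ ^ 2 : ℝ) ^ ((1:ℝ)/4 - 1) = k₀ ^ (-(3:ℝ)/2) := by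
        rw [← Real.rpow_natCast k₀ 2, ← Real.rpow_mul hk₀.le]
        norm_num
      have e2 : Real.sqrt k₀ = k₀ ^ ((1:ℝ)/2) := by
        rw [Real.sqrt_eq_rpow]
      have e3 : Real.sqrt k₀ * k₀ ^ (-(3:ℝ)/2) = k₀⁻¹ := by
        rw [e2, ← Real.rpow_add hk₀]
        norm_num [Real.rpow_neg_one]
      have e4 : (Real.sqrt k₀) ^ 2 = k₀ := Real.sq_sqrt hk₀.le
      rw [e1, zero_mul, zero_sub, mul_one, e4]
      rw [show Real.sqrt k₀ * ((1:ℝ)/4 * k₀ ^ (-(3:ℝ)/2)) =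
        (1:ℝ)/4 * (k₀ ^ (-(3:ℝ)/2) * Real.sqrt k₀) by ring]
      rw [show k₀ ^ (-(3:ℝ)/2) * Real.sqrt k₀ = k₀⁻¹ by
        rw [e2, ← Real.rpow_add hk₀]
        norm_num [Real.rpow_neg_one]]
      field_simp
    rw [← heq]
    exact hd
  -- squaring map tends into 𝓝[≠] 0
  have hsq : Tendsto (fun k₁ : ℝ => k₁ ^ 2) (𝓝[>] (0:ℝ)) (𝓝[≠] (0:ℝ)) := by
    apply tendsto_nhdsWithin_of_tendsto_nhds_of_eventually_within
    · have := ((continuous_pow 2).tendsto (0:ℝ)).mono_left (nhdsWithin_le_nhds (s := Set.Ioi 0))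
      simpa using this
    · filter_upwards [self_mem_nhdsWithin] with x hx
      exact (pow_pos (Set.mem_Ioi.mp hx) 2).ne'
  -- limit of (1 - u k₁)/k₁²
  have hB : Tendsto (fun k₁ : ℝ => (1 - u k₁) / k₁ ^ 2) (𝓝[>] (0:ℝ))
      (𝓝 (1 / (4 * k₀ ^ 2))) := by
    have hslope := (hasDerivAt_iff_tendsto_slope.mp hφderiv).comp hsq
    have : Tendsto (fun k₁ : ℝ => -(slope φ 0 (k₁ ^ 2))) (𝓝[>] (0:ℝ))
        (𝓝 (-(-(1 / (4 * k₀ ^ 2))))) := hslope.neg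
    rw [neg_neg] at this
    refine this.congr' ?_
    filter_upwards [self_mem_nhdsWithin] with x hx
    have hx2 : (x:ℝ) ^ 2 ≠ 0 := (pow_pos (Set.mem_Ioi.mp hx) 2).ne'
    rw [slope_def_field, hφ0]
    field_simp
    rw [sub_zero, mul_div_cancel_left₀ _ hx2]
    simp only [hφdef, hudef]
    ring
  -- limit of sqrt term
  have hC : Tendsto (fun k₁ : ℝ => Real.sqrt ((1 - u k₁) / k₁ ^ 2 / 2)) (𝓝[>] (0:ℝ))
      (𝓝 (Real.sqrt 2 / (4 * k₀))) := by
    have := (hB.div_const 2).sqrt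
    have hval : Real.sqrt (1 / (4 * k₀ ^ 2) / 2) = Real.sqrt 2 / (4 * k₀) := by
      rw [show (1 / (4 * k₀ ^ 2) / 2 : ℝ) = (Real.sqrt 2 / (4 * k₀)) ^ 2 by
        rw [div_pow, Real.sq_sqrt (by norm_num : (0:ℝ) ≤ 2)]
        field_simp; ring]
      exact Real.sqrt_sq (by positivity)
    rwa [hval] at this
  -- limit of arcsin (g k₁) / g k₁
  have hD : Tendsto (fun k₁ : ℝ => Real.arcsin (g k₁) / g k₁) (𝓝[>] (0:ℝ)) (𝓝 1) := by
    have harc : HasDerivAt Real.arcsin 1 0 := by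
      have := Real.hasDerivAt_arcsin (by norm_num : (0:ℝ) ≠ -1) (by norm_num : (0:ℝ) ≠ 1)
      simpa using this
    have hslope : Tendsto (fun y : ℝ => Real.arcsin y / y) (𝓝[≠] (0:ℝ)) (𝓝 1) := by
      refine (hasDerivAt_iff_tendsto_slope.mp harc).congr' ?_
      filter_upwards [self_mem_nhdsWithin] with y hy
      rw [slope_def_field]
      simp [Real.arcsin_zero]
    -- g tends to 0 within (0, ∞)
    have hu0 : Tendsto u (𝓝[>] (0:ℝ)) (𝓝 1) := by
      have hcont : ContinuousAt u 0 := by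
        apply ContinuousAt.div continuousAt_const
        · exact (Real.continuousAt_rpow_const _ _ (Or.inl (by positivity))).comp
            (by fun_prop)
        · exact (hden 0).ne'
      have := hcont.tendsto.mono_left (nhdsWithin_le_nhds (s := Set.Ioi (0:ℝ)))
      have hu0v : u 0 = 1 := by
        simp only [hudef]
        rw [show (0:ℝ) ^ 2 = 0 by norm_num, add_zero, hroot, div_self hsk₀.ne']
      rwa [hu0v] at this
    have hg0 : Tendsto g (𝓝[>] (0:ℝ)) (𝓝[≠] (0:ℝ)) := by
      apply tendsto_nhdsWithin_of_tendsto_nhds_of_eventually_within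
      · have : Tendsto (fun k₁ : ℝ => (1 - u k₁) / 2) (𝓝[>] (0:ℝ)) (𝓝 0) := by
          have := ((tendsto_const_nhds (x := (1:ℝ))).sub hu0).div_const 2
          simpa using this
        have h2 := this.sqrt
        rw [Real.sqrt_zero] at h2
        exact h2
      · filter_upwards [self_mem_nhdsWithin] with x hx
        have : 0 < g x := Real.sqrt_pos.mpr (by
          have := hu_lt_one x hx.ne'
          linarith)
        exact this.ne'
    exact hslope.comp hg0
  -- limit of arctan part
  have hA : Tendsto (fun k₁ : ℝ => Real.arctan (k₁ / k₀) / k₁) (𝓝[>] (0:ℝ))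
      (𝓝 (1 / k₀)) := by
    have hd : HasDerivAt (fun x : ℝ => Real.arctan (x / k₀)) (1 / k₀) 0 := by
      have h1 : HasDerivAt (fun x : ℝ => x / k₀) (1 / k₀) 0 := by
        simpa using (hasDerivAt_id (0:ℝ)).div_const k₀
      have := (Real.hasDerivAt_arctan ((0:ℝ) / k₀)).comp 0 h1
      simpa [Function.comp_def] using this
    have := (hasDerivAt_iff_tendsto_slope.mp hd).mono_left
      (nhdsWithin_mono _ (fun x hx => Set.mem_compl_singleton_iff.mpr (Set.mem_Ioi.mp hx).ne'))
    refine this.congr' ?_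
    filter_upwards [self_mem_nhdsWithin] with x hx
    rw [slope_def_field]
    simp [Real.arctan_zero]
  -- assemble
  have hmain : Tendsto (fun k₁ : ℝ =>
      4 * (Real.arcsin (g k₁) / g k₁) * Real.sqrt ((1 - u k₁) / k₁ ^ 2 / 2)
        - Real.arctan (k₁ / k₀) / k₁) (𝓝[>] (0:ℝ))
      (𝓝 (4 * 1 * (Real.sqrt 2 / (4 * k₀)) - 1 / k₀)) :=
    ((hD.const_mul 4).mul hC).sub hA
  have hval : (4 * 1 * (Real.sqrt 2 / (4 * k₀)) - 1 / k₀ : ℝ) = (Real.sqrt 2 - 1) / k₀ := by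
    field_simp
  rw [hval] at hmain
  refine hmain.congr' ?_
  filter_upwards [self_mem_nhdsWithin] with k₁ hk₁
  have hk₁0 : (0:ℝ) < k₁ := hk₁
  have hglt : u k₁ < 1 := hu_lt_one k₁ hk₁0.ne'
  have hgpos : 0 < g k₁ := Real.sqrt_pos.mpr (by linarith)
  have harccos : Real.arccos (u k₁) = 2 * Real.arcsin (g k₁) :=
    arccos_eq_two_arcsin (by linarith [hu_nonneg k₁]) (hu_le_one k₁)
  have hsqrt : Real.sqrt ((1 - u k₁) / k₁ ^ 2 / 2) = g k₁ / k₁ := by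
    rw [hgdef]
    rw [show ((1 - u k₁) / k₁ ^ 2 / 2 : ℝ) = ((1 - u k₁) / 2) / k₁ ^ 2 by ring]
    rw [Real.sqrt_div (by linarith : (0:ℝ) ≤ (1 - u k₁) / 2), Real.sqrt_sq hk₁0.le]
  rw [hsqrt, harccos]
  field_simp
  ring
end

section
/- For a fixed k₀ > 0, the function k₁ ↦ (1/k₁)·(2·arcosh(√k₀ / (k₀² − k₁²)^{1/4}) − artanh(k₁/k₀)), defined for 0 < k₁ < k₀, tends to (√2 − 1)/k₀ as k₁ tends to 0 from the right, where arcosh x = log(x + √(x² − 1)) for x ≥ 1 and artanh x = (1/2)·log((1 + x)/(1 − x)) for |x| < 1. -/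
open Real Topology Filter

noncomputable def artanh (x : ℝ) : ℝ := (1 / 2) * Real.log ((1 + x) / (1 - x))

lemma key (k₀ k₁ : ℝ) (h0 : 0 < k₁) (h1 : k₁ < k₀) :
    2 * _root_.arcosh (Real.sqrt k₀ / (k₀ ^ 2 - k₁ ^ 2) ^ ((1 : ℝ) / 4)) - _root_.artanh (k₁ / k₀)
      = 2 * Real.log (1 + k₁ / (Real.sqrt k₀ * Real.sqrt (k₀ + Real.sqrt (k₀ ^ 2 - k₁ ^ 2))))
        - Real.log (1 + k₁ / k₀) := by
  have hk₀ : 0 < k₀ := h0.trans h1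
  set a : ℝ := k₀ ^ 2 - k₁ ^ 2 with ha
  have ha0 : 0 < a := by nlinarith
  set s : ℝ := Real.sqrt a with hsdef
  have hs0 : 0 < s := Real.sqrt_pos.mpr ha0
  have hs2 : s ^ 2 = a := Real.sq_sqrt ha0.le
  have hslt : s < k₀ := by nlinarith [hs2]
  -- quarter root
  have hq : a ^ ((1 : ℝ) / 4) = Real.sqrt s := by
    rw [hsdef, Real.sqrt_eq_rpow, Real.sqrt_eq_rpow, ← Real.rpow_mul ha0.le]
    norm_num
  have hss : Real.sqrt s > 0 := Real.sqrt_pos.mpr hs0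
  -- x and x^2 - 1
  set x : ℝ := Real.sqrt k₀ / Real.sqrt s with hx
  have hx2 : x ^ 2 = k₀ / s := by
    rw [hx, div_pow, Real.sq_sqrt hk₀.le, Real.sq_sqrt hs0.le]
  have hx21 : x ^ 2 - 1 = (k₀ - s) / s := by
    rw [hx2]; field_simp
  have hks : 0 ≤ k₀ - s := by linarith
  have hkps : 0 < k₀ + s := by linarith
  -- sqrt (k₀ - s) = k₁ / sqrt (k₀ + s)
  have hmul : (k₀ - s) * (k₀ + s) = k₁ ^ 2 := by nlinarith [hs2]
  have hsqkps : Real.sqrt (k₀ + s) > 0 := Real.sqrt_pos.mpr hkps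
  have hkey : Real.sqrt (k₀ - s) = k₁ / Real.sqrt (k₀ + s) := by
    have h2 : k₀ - s = (k₁ / Real.sqrt (k₀ + s)) ^ 2 := by
      rw [div_pow, Real.sq_sqrt hkps.le]
      field_simp
      nlinarith [hs2]
    rw [h2, Real.sqrt_sq (by positivity)]
  have hsx : Real.sqrt (x ^ 2 - 1) = k₁ / (Real.sqrt (k₀ + s) * Real.sqrt s) := by
    rw [hx21, Real.sqrt_div hks, hkey, div_div]
  -- u
  set u : ℝ := k₁ / (Real.sqrt k₀ * Real.sqrt (k₀ + s)) with hu
  have hu0 : 0 < u := by positivity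
  -- argument of log
  have hsqk0 : (0:ℝ) < Real.sqrt k₀ := Real.sqrt_pos.mpr hk₀
  have harg : x + Real.sqrt (x ^ 2 - 1) = Real.sqrt k₀ * (1 + u) / Real.sqrt s := by
    rw [hsx, hx, hu]
    field_simp
  have hlog1 : _root_.arcosh (Real.sqrt k₀ / a ^ ((1 : ℝ) / 4))
      = Real.log (Real.sqrt k₀) + Real.log (1 + u) - Real.log (Real.sqrt s) := by
    rw [hq, _root_.arcosh, ← hx, harg, Real.log_div (by positivity) (by positivity),
      Real.log_mul (by positivity) (by positivity)]
  have hlsq0 : Real.log (Real.sqrt k₀) = Real.log k₀ / 2 := Real.log_sqrt hk₀.le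
  have hlss : Real.log (Real.sqrt s) = Real.log s / 2 := Real.log_sqrt hs0.le
  have hls : Real.log s = (Real.log (k₀ + k₁) + Real.log (k₀ - k₁)) / 2 := by
    rw [hsdef, Real.log_sqrt ha0.le, ha,
      show k₀ ^ 2 - k₁ ^ 2 = (k₀ + k₁) * (k₀ - k₁) by ring,
      Real.log_mul (by positivity) (ne_of_gt (by linarith))]
  have hart : _root_.artanh (k₁ / k₀) = (Real.log (k₀ + k₁) - Real.log (k₀ - k₁)) / 2 := by
    rw [_root_.artanh, show (1 + k₁ / k₀) / (1 - k₁ / k₀) = (k₀ + k₁) / (k₀ - k₁) by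
        rw [div_eq_div_iff (ne_of_gt (by rw [sub_pos]; exact (div_lt_one hk₀).mpr h1)) (ne_of_gt (by linarith))]; field_simp,
      Real.log_div (by positivity) (ne_of_gt (by linarith))]
    ring
  have hlk : Real.log (1 + k₁ / k₀) = Real.log (k₀ + k₁) - Real.log k₀ := by
    rw [show 1 + k₁ / k₀ = (k₀ + k₁) / k₀ by field_simp,
      Real.log_div (by positivity) (ne_of_gt hk₀)]
  rw [hlog1, hart, hlk, hlsq0, hlss, hls]
  ring

lemma L_tendsto : Tendsto (fun t : ℝ => Real.log (1 + t) / t) (𝓝[≠] (0:ℝ)) (𝓝 1) := by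
  have h : HasDerivAt Real.log 1 1 := by simpa using Real.hasDerivAt_log one_ne_zero
  have h2 := hasDerivAt_iff_tendsto_slope.mp h
  have h3 : Tendsto (fun t : ℝ => 1 + t) (𝓝[≠] (0:ℝ)) (𝓝[≠] (1:ℝ)) := by
    rw [tendsto_nhdsWithin_iff]
    constructor
    · have : Tendsto (fun t : ℝ => 1 + t) (𝓝 0) (𝓝 1) := by
        simpa using (continuous_add_left (1:ℝ)).tendsto (0:ℝ)
      exact this.mono_left nhdsWithin_le_nhds
    · filter_upwards [self_mem_nhdsWithin] with t ht
      simp only [Set.mem_compl_iff, Set.mem_singleton_iff] at ht ⊢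
      intro hcon; exact ht (by linarith)
  have h4 := h2.comp h3
  refine h4.congr fun t => ?_
  simp [Function.comp, slope_def_field]

theorem hyperbolic_width_tendsto_euclidean (k₀ : ℝ) (hk₀ : 0 < k₀) :
    Tendsto (fun k₁ : ℝ =>
        (1 / k₁) * (2 * _root_.arcosh (Real.sqrt k₀ /
          (k₀ ^ 2 - k₁ ^ 2) ^ ((1 : ℝ) / 4)) - _root_.artanh (k₁ / k₀)))
      (𝓝[>] 0) (𝓝 ((Real.sqrt 2 - 1) / k₀)) := by
  set c : ℝ → ℝ := fun k₁ => 1 / (Real.sqrt k₀ * Real.sqrt (k₀ + Real.sqrt (k₀ ^ 2 - k₁ ^ 2)))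
    with hc
  set L : ℝ → ℝ := fun t => Real.log (1 + t) / t with hL
  set G : ℝ → ℝ := fun k₁ => 2 * c k₁ * L (k₁ * c k₁) - (1 / k₀) * L (k₁ / k₀) with hG
  have hcpos : ∀ k₁ : ℝ, 0 < c k₁ := by
    intro k₁
    have h1 : 0 ≤ Real.sqrt (k₀ ^ 2 - k₁ ^ 2) := Real.sqrt_nonneg _
    positivity
  -- continuity of c at 0
  have hden : Continuous (fun k₁ : ℝ => Real.sqrt k₀ * Real.sqrt (k₀ + Real.sqrt (k₀ ^ 2 - k₁ ^ 2))) := by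
    apply continuous_const.mul
    exact Real.continuous_sqrt.comp (continuous_const.add
      (Real.continuous_sqrt.comp (continuous_const.sub (continuous_pow 2))))
  have hden0 : Real.sqrt k₀ * Real.sqrt (k₀ + Real.sqrt (k₀ ^ 2 - (0:ℝ) ^ 2))
      = Real.sqrt 2 * k₀ := by
    rw [show k₀ ^ 2 - (0:ℝ) ^ 2 = k₀ ^ 2 by ring, Real.sqrt_sq hk₀.le,
      show k₀ + k₀ = 2 * k₀ by ring, Real.sqrt_mul (by norm_num) k₀,
      show Real.sqrt k₀ * (Real.sqrt 2 * Real.sqrt k₀)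
        = Real.sqrt 2 * (Real.sqrt k₀ * Real.sqrt k₀) by ring,
      Real.mul_self_sqrt hk₀.le]
  have hC : Tendsto c (𝓝[>] (0:ℝ)) (𝓝 (1 / (Real.sqrt 2 * k₀))) := by
    have hcc : ContinuousAt c 0 := by
      apply ContinuousAt.div continuousAt_const hden.continuousAt
      show Real.sqrt k₀ * Real.sqrt (k₀ + Real.sqrt (k₀ ^ 2 - (0:ℝ) ^ 2)) ≠ 0
      rw [hden0]; positivity
    have := hcc.tendsto
    rw [show c 0 = 1 / (Real.sqrt 2 * k₀) by
      show 1 / (Real.sqrt k₀ * Real.sqrt (k₀ + Real.sqrt (k₀ ^ 2 - (0:ℝ) ^ 2)))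
        = 1 / (Real.sqrt 2 * k₀)
      rw [hden0]] at this
    exact this.mono_left nhdsWithin_le_nhds
  have hu : Tendsto (fun k₁ : ℝ => k₁ * c k₁) (𝓝[>] (0:ℝ)) (𝓝[≠] (0:ℝ)) := by
    rw [tendsto_nhdsWithin_iff]
    constructor
    · have := (tendsto_id.mono_left nhdsWithin_le_nhds).mul hC
      simpa using this
    · filter_upwards [self_mem_nhdsWithin] with t ht
      have : 0 < t * c t := mul_pos ht (hcpos t)
      simp only [Set.mem_compl_iff, Set.mem_singleton_iff]
      exact ne_of_gt this
  have hv : Tendsto (fun k₁ : ℝ => k₁ / k₀) (𝓝[>] (0:ℝ)) (𝓝[≠] (0:ℝ)) := by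
    rw [tendsto_nhdsWithin_iff]
    constructor
    · have : Tendsto (fun k₁ : ℝ => k₁ / k₀) (𝓝 0) (𝓝 (0 / k₀)) :=
        (tendsto_id (x := 𝓝 (0:ℝ))).div_const k₀
      simpa using this.mono_left nhdsWithin_le_nhds
    · filter_upwards [self_mem_nhdsWithin] with t ht
      simp only [Set.mem_compl_iff, Set.mem_singleton_iff]
      exact ne_of_gt (div_pos ht hk₀)
  have hGlim : Tendsto G (𝓝[>] (0:ℝ)) (𝓝 ((Real.sqrt 2 - 1) / k₀)) := by
    have h1 : Tendsto (fun k₁ => 2 * c k₁ * L (k₁ * c k₁)) (𝓝[>] (0:ℝ))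
        (𝓝 (2 * (1 / (Real.sqrt 2 * k₀)) * 1)) :=
      (tendsto_const_nhds.mul hC).mul (L_tendsto.comp hu)
    have h2 : Tendsto (fun k₁ => (1 / k₀) * L (k₁ / k₀)) (𝓝[>] (0:ℝ)) (𝓝 ((1 / k₀) * 1)) :=
      tendsto_const_nhds.mul (L_tendsto.comp hv)
    have h3 := h1.sub h2
    have hs2 : Real.sqrt 2 * Real.sqrt 2 = 2 := Real.mul_self_sqrt (by norm_num)
    have : 2 * (1 / (Real.sqrt 2 * k₀)) * 1 - (1 / k₀) * 1 = (Real.sqrt 2 - 1) / k₀ := by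
      have hs0 : (0:ℝ) < Real.sqrt 2 := Real.sqrt_pos.mpr (by norm_num)
      field_simp
      linear_combination (-1 : ℝ) * hs2
    rwa [this] at h3
  apply hGlim.congr'
  filter_upwards [Ioo_mem_nhdsGT_of_mem (Set.mem_Ico.mpr ⟨le_refl (0:ℝ), hk₀⟩)] with k₁ hk₁
  obtain ⟨h0, h1⟩ := hk₁
  have hkey := key k₀ k₁ h0 h1
  have hu_eq : k₁ / (Real.sqrt k₀ * Real.sqrt (k₀ + Real.sqrt (k₀ ^ 2 - k₁ ^ 2))) = k₁ * c k₁ :=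
    (mul_one_div k₁ _).symm
  have hG' : G k₁ = 2 * c k₁ * (Real.log (1 + k₁ * c k₁) / (k₁ * c k₁))
      - (1 / k₀) * (Real.log (1 + k₁ / k₀) / (k₁ / k₀)) := rfl
  rw [hG', hkey, hu_eq]
  obtain ⟨cc, hccpos, hcceq⟩ : ∃ cc, 0 < cc ∧ c k₁ = cc := ⟨c k₁, hcpos k₁, rfl⟩
  rw [hcceq]
  set A := Real.log (1 + k₁ * cc) with hA
  set B := Real.log (1 + k₁ / k₀) with hB
  field_simp
end
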